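/- arXiv:2310.07971 — 2 statements merged into one kernel-verified Lean document; each statement's English description precedes it below -/
import Mathlib

section
/- Let R be a principal ideal domain and let f: {0,1,…,m} → R-Mod be a persistence module that is pointwise free and finitely generated. Suppose f admits two interval decompositions: f ≅ ⊕_{k=1}^{r} I_R^{b_k,d_k} and f ≅ ⊕_{ℓ=1}^{r'} I_R^{b'_ℓ,d'_ℓ}, with 0 ≤ b_k < d_k ≤ m and 0 ≤ b'_ℓ < d'_ℓ ≤ m for all k, ℓ. Then r = r' and there exists a permutation π of {1,…,r} such that (b_k, d_k) = (b'_{π(k)}, d'_{π(k)}) for every k; i.e., the multiset of intervals associated to an interval decomposition is unique. -/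
universe u v

/-- A (finitely-indexed) persistence module over `R`, indexed by `{0, 1, …, m}`
(encoded as `Fin (m+1)`): a functor from the poset `{0,…,m}` to `R`-modules. -/
structure PersistenceModule (R : Type u) [CommRing R] (m : ℕ) where
  X : Fin (m + 1) → Type v
  [addCommGroup : ∀ i, AddCommGroup (X i)]
  [module : ∀ i, Module R (X i)]
  map : ∀ i j : Fin (m + 1), i ≤ j → X i →ₗ[R] X j
  map_id : ∀ (i : Fin (m + 1)) (h : i ≤ i), map i i h = LinearMap.id
  map_comp : ∀ (i s j : Fin (m + 1)) (h₁ : i ≤ s) (h₂ : s ≤ j),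
    (map s j h₂).comp (map i s h₁) = map i j (h₁.trans h₂)

attribute [instance] PersistenceModule.addCommGroup PersistenceModule.module

/-- The direct sum of the interval modules `I_R^{(p k).1, (p k).2}`, `k : Fin n`,
realized concretely: its stalk at `i` is the free module on the set of `k` with
`(p k).1 ≤ i < (p k).2`, and structure maps match basis elements to basis elements. -/
def intervalSum (R : Type u) [CommRing R] (m n : ℕ) (p : Fin n → ℕ × ℕ) :
    PersistenceModule R m where
  X i := {k : Fin n // (p k).1 ≤ i.val ∧ i.val < (p k).2} → R
  map i j hij :=
    { toFun := fun g k =>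
        if h : (p k.val).1 ≤ i.val then
          g ⟨k.val, h, lt_of_le_of_lt (Fin.le_def.mp hij) k.prop.2⟩
        else 0
      map_add' := fun g₁ g₂ => by
        funext k
        by_cases h : (p k.val).1 ≤ i.val <;> simp [h]
      map_smul' := fun c g => by
        funext k
        by_cases h : (p k.val).1 ≤ i.val <;> simp [h] }
  map_id := fun i h => by
    refine LinearMap.ext fun g => funext fun k => ?_
    simp only [LinearMap.coe_mk, AddHom.coe_mk, LinearMap.id_coe, id_eq]
    rw [dif_pos k.prop.1]
  map_comp := fun i s j h₁ h₂ => by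
    refine LinearMap.ext fun g => funext fun k => ?_
    simp only [LinearMap.coe_comp, Function.comp_apply, LinearMap.coe_mk, AddHom.coe_mk]
    by_cases hi : (p k.val).1 ≤ i.val
    · rw [dif_pos (le_trans hi (Fin.le_def.mp h₁)), dif_pos hi]
    · rw [dif_neg hi]
      by_cases hs : (p k.val).1 ≤ s.val
      · rw [dif_pos hs, dif_neg hi]
      · rw [dif_neg hs]

/-- Two persistence modules are isomorphic if there is a family of linear
equivalences commuting with the structure maps. -/
def PersIsomorphic {R : Type u} [CommRing R] {m : ℕ}
    (f : PersistenceModule R m) (g : PersistenceModule R m) : Prop :=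
  ∃ e : ∀ i, f.X i ≃ₗ[R] g.X i,
    ∀ (i j : Fin (m + 1)) (h : i ≤ j) (v : f.X i),
      e j (f.map i j h v) = g.map i j h (e i v)

/-- `f` admits an interval decomposition: it is isomorphic, as a persistence module,
to a finite direct sum of interval modules `I_R^{b_k, d_k}` with `0 ≤ b_k < d_k ≤ m`. -/
def HasIntervalDecomposition {R : Type u} [CommRing R] {m : ℕ}
    (f : PersistenceModule R m) : Prop :=
  ∃ (n : ℕ) (p : Fin n → ℕ × ℕ),
    (∀ k, (p k).1 < (p k).2 ∧ (p k).2 ≤ m) ∧ PersIsomorphic f (intervalSum R m n p)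

/-! The rank of `f(i ≤ j)` is an isomorphism invariant, and for a direct sum of interval modules
it counts the intervals `[b, d)` with `b ≤ i` and `j < d`. Inclusion–exclusion over these ranks
recovers the multiplicity of each interval: for `b < d`, it is
`rk(b, d-1) - rk(b, d) - rk(b-1, d-1) + rk(b-1, d)`, where `rk(-1, ·) = 0`.
Families of intervals with the same multiplicities differ by a permutation. -/

open Finset

section LinearAlgebra

variable {R M N M' N' : Type*} [CommRing R]
  [AddCommGroup M] [Module R M] [AddCommGroup N] [Module R N]
  [AddCommGroup M'] [Module R M'] [AddCommGroup N'] [Module R N']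

theorem LinearMap.finrank_range_eq_of_comp_eq {f : M →ₗ[R] N} {g : M' →ₗ[R] N'}
    (e₁ : M ≃ₗ[R] M') (e₂ : N ≃ₗ[R] N') (h : e₂.toLinearMap ∘ₗ f = g ∘ₗ e₁.toLinearMap) :
    Module.finrank R (LinearMap.range f) = Module.finrank R (LinearMap.range g) := by
  calc Module.finrank R (LinearMap.range f)
      = Module.finrank R (LinearMap.range (e₂.toLinearMap ∘ₗ f)) := by
        rw [LinearMap.range_comp, LinearEquiv.finrank_map_eq]
    _ = Module.finrank R (LinearMap.range g) := by
        rw [h, LinearMap.range_comp_of_range_eq_top _ (LinearEquiv.range e₁)]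

theorem LinearMap.finrank_range_comp_of_injective_of_surjective {g : N →ₗ[R] N'} {f : M →ₗ[R] N}
    (hg : Function.Injective g) (hf : Function.Surjective f) :
    Module.finrank R (LinearMap.range (g ∘ₗ f)) = Module.finrank R N := by
  rw [LinearMap.range_comp_of_range_eq_top _ (LinearMap.range_eq_top.mpr hf),
    LinearMap.finrank_range_of_inj hg]

end LinearAlgebra

theorem PersIsomorphic.finrank_range_map_eq {R : Type u} [CommRing R] {m : ℕ}
    {f g : PersistenceModule R m} (hfg : PersIsomorphic f g) (i j : Fin (m + 1)) (hij : i ≤ j) :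
    Module.finrank R (LinearMap.range (f.map i j hij)) =
      Module.finrank R (LinearMap.range (g.map i j hij)) := by
  obtain ⟨e, he⟩ := hfg
  exact LinearMap.finrank_range_eq_of_comp_eq (e i) (e j) (LinearMap.ext (he i j hij))

/-- The intervals of the barcode `q` that contain both `i` and `j`; `q k = (b, d)` stands for
the interval `[b, d)`, so the stalk of `intervalSum` at `i` is `barsThrough p i i → R`. -/
abbrev barsThrough {ι : Type*} (q : ι → ℕ × ℕ) (i j : ℕ) : Type _ :=
  {k : ι // (q k).1 ≤ i ∧ j < (q k).2}

def barcodeRank {ι : Type*} [Fintype ι] (q : ι → ℕ × ℕ) (i j : ℕ) : ℕ :=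
  #{k | (q k).1 ≤ i ∧ j < (q k).2}

theorem intervalSum_map_eq_extendByZero_comp_funLeft (R : Type u) [CommRing R] (m n : ℕ)
    (p : Fin n → ℕ × ℕ) (i j : Fin (m + 1)) (hij : i ≤ j) :
    (intervalSum R m n p).map i j hij =
      Function.ExtendByZero.linearMap R
          (Subtype.map id fun _ hk => ⟨hk.1.trans hij, hk.2⟩ :
            barsThrough p i j → barsThrough p j j) ∘ₗ
        LinearMap.funLeft R R
          (Subtype.map id fun _ hk => ⟨hk.1, lt_of_le_of_lt hij hk.2⟩ :
            barsThrough p i j → barsThrough p i i) := by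
  refine LinearMap.ext fun g => funext fun ⟨k, hkj⟩ => ?_
  change dite _ _ _ = Function.extend _ _ (fun _ => (0 : R)) _
  split_ifs with hki
  · symm
    exact ((Subtype.map_injective _ Function.injective_id).extend_apply _ _
      (⟨k, hki, hkj.2⟩ : barsThrough p i j)).trans rfl
  · rw [Function.extend_apply']
    rintro ⟨a, ha⟩
    exact hki (congrArg Subtype.val ha ▸ a.2.1)

theorem finrank_range_intervalSum_map (R : Type u) [CommRing R] [Nontrivial R] (m n : ℕ)
    (p : Fin n → ℕ × ℕ) (i j : Fin (m + 1)) (hij : i ≤ j) :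
    Module.finrank R (LinearMap.range ((intervalSum R m n p).map i j hij)) =
      barcodeRank p i j := by
  rw [intervalSum_map_eq_extendByZero_comp_funLeft]
  refine (LinearMap.finrank_range_comp_of_injective_of_surjective
    (Function.extend_injective (Subtype.map_injective _ Function.injective_id) _)
    (LinearMap.funLeft_surjective_of_injective _ _ _
      (Subtype.map_injective _ Function.injective_id))).trans ?_
  rw [Module.finrank_fintype_fun_eq_card, barcodeRank, Fintype.card_subtype]

section Barcode

variable {ι ι' : Type*} [Fintype ι] [Fintype ι']

theorem card_fiber_inclusion_exclusion (q : ι → ℕ × ℕ) {b d : ℕ} (hd : 0 < d) :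
    #{k | q k = (b, d)} + barcodeRank q b d + #{k | (q k).1 < b ∧ d - 1 < (q k).2} =
      barcodeRank q b (d - 1) + #{k | (q k).1 < b ∧ d < (q k).2} := by
  simp only [barcodeRank, card_filter, ← sum_add_distrib]
  refine sum_congr rfl fun k _ => ?_
  obtain ⟨b', d'⟩ := q k
  simp only [Prod.mk.injEq]
  split_ifs <;> omega

theorem card_fst_lt_eq_of_barcodeRank_eq {q : ι → ℕ × ℕ} {q' : ι' → ℕ × ℕ} {b j : ℕ}
    (H : ∀ i ≤ j, barcodeRank q i j = barcodeRank q' i j) (hb : b ≤ j + 1) :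
    #{k | (q k).1 < b ∧ j < (q k).2} = #{k | (q' k).1 < b ∧ j < (q' k).2} := by
  cases b with
  | zero => simp
  | succ i =>
    simp only [Nat.lt_succ_iff]
    exact H i (by omega)

theorem card_fiber_eq_zero {q : ι → ℕ × ℕ} {m : ℕ} (hq : ∀ k, (q k).1 < (q k).2 ∧ (q k).2 ≤ m)
    {v : ℕ × ℕ} (hv : ¬(v.1 < v.2 ∧ v.2 ≤ m)) : #{k | q k = v} = 0 := by
  rw [card_eq_zero, filter_eq_empty_iff]
  rintro k - rfl
  exact hv (hq k)

theorem card_fiber_eq_of_barcodeRank_eq {q : ι → ℕ × ℕ} {q' : ι' → ℕ × ℕ} {m : ℕ}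
    (hq : ∀ k, (q k).1 < (q k).2 ∧ (q k).2 ≤ m) (hq' : ∀ k, (q' k).1 < (q' k).2 ∧ (q' k).2 ≤ m)
    (H : ∀ i j, i ≤ j → j ≤ m → barcodeRank q i j = barcodeRank q' i j) (v : ℕ × ℕ) :
    #{k | q k = v} = #{k | q' k = v} := by
  obtain ⟨b, d⟩ := v
  by_cases hv : b < d ∧ d ≤ m
  · have h₁ := card_fiber_inclusion_exclusion q (b := b) (show 0 < d by omega)
    have h₂ := card_fiber_inclusion_exclusion q' (b := b) (show 0 < d by omega)
    have h₃ := H b (d - 1) (by omega) (by omega)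
    have h₄ := H b d (by omega) hv.2
    have h₅ := card_fst_lt_eq_of_barcodeRank_eq (fun i hi => H i (d - 1) hi (by omega))
      (show b ≤ d - 1 + 1 by omega)
    have h₆ := card_fst_lt_eq_of_barcodeRank_eq (fun i hi => H i d hi hv.2)
      (show b ≤ d + 1 by omega)
    omega
  · rw [card_fiber_eq_zero hq hv, card_fiber_eq_zero hq' hv]

end Barcode

theorem exists_equiv_of_card_fiber_eq {ι ι' α : Type*} [Fintype ι] [Fintype ι'] [DecidableEq α]
    (q : ι → α) (q' : ι' → α) (h : ∀ v, #{k | q k = v} = #{k | q' k = v}) :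
    ∃ π : ι ≃ ι', ∀ k, q k = q' (π k) := by
  have hcard (v : α) : Fintype.card {k // q k = v} = Fintype.card {k // q' k = v} := by
    simpa only [Fintype.card_subtype] using h v
  exact ⟨Equiv.ofFiberEquiv fun v => Fintype.equivOfCardEq (hcard v),
    fun k => (Equiv.ofFiberEquiv_map _ k).symm⟩

theorem interval_decomposition_unique_general
    (R : Type u) [CommRing R] [IsDomain R]
    (m : ℕ) (f : PersistenceModule R m)
    (n n' : ℕ) (p : Fin n → ℕ × ℕ) (p' : Fin n' → ℕ × ℕ)
    (hp : ∀ k, (p k).1 < (p k).2 ∧ (p k).2 ≤ m)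
    (hp' : ∀ k, (p' k).1 < (p' k).2 ∧ (p' k).2 ≤ m)
    (h1 : PersIsomorphic f (intervalSum R m n p))
    (h2 : PersIsomorphic f (intervalSum R m n' p')) :
    n = n' ∧ ∃ π : Fin n ≃ Fin n', ∀ k, p k = p' (π k) := by
  have hrank (i j : ℕ) (hij : i ≤ j) (hjm : j ≤ m) : barcodeRank p i j = barcodeRank p' i j := by
    have hij' : (⟨i, by omega⟩ : Fin (m + 1)) ≤ ⟨j, by omega⟩ := hij
    have := (h1.finrank_range_map_eq _ _ hij').symm.trans (h2.finrank_range_map_eq _ _ hij')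
    rwa [finrank_range_intervalSum_map, finrank_range_intervalSum_map] at this
  obtain ⟨π, hπ⟩ := exists_equiv_of_card_fiber_eq p p' (card_fiber_eq_of_barcodeRank_eq hp hp' hrank)
  exact ⟨by simpa using Fintype.card_congr π, π, hπ⟩

/-- **Theorem (`thm:unique_interval_decomp`).**  Let `R` be a PID and `f` a pointwise
free and finitely generated persistence module.  If `f ≅ ⊕_{k=1}^{r} I_R^{bₖ,dₖ}` and
`f ≅ ⊕_{ℓ=1}^{r'} I_R^{b'ₗ,d'ₗ}` are two interval decompositions of `f`, then `r = r'`
and there is a permutation `π` with `(bₖ,dₖ) = (b'_{π k}, d'_{π k})` for every `k`: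
the multiset of intervals is unique. -/
theorem interval_decomposition_unique
    (R : Type u) [CommRing R] [IsDomain R] [IsPrincipalIdealRing R]
    (m : ℕ) (f : PersistenceModule R m)
    (hfree : ∀ i, Module.Free R (f.X i)) (hfin : ∀ i, Module.Finite R (f.X i))
    (n n' : ℕ) (p : Fin n → ℕ × ℕ) (p' : Fin n' → ℕ × ℕ)
    (hp : ∀ k, (p k).1 < (p k).2 ∧ (p k).2 ≤ m)
    (hp' : ∀ k, (p' k).1 < (p' k).2 ∧ (p' k).2 ≤ m)
    (h1 : PersIsomorphic f (intervalSum R m n p))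
    (h2 : PersIsomorphic f (intervalSum R m n' p')) :
    n = n' ∧ ∃ π : Fin n ≃ Fin n', ∀ k, p k = p' (π k) :=
  interval_decomposition_unique_general R m f n n' p p' hp hp' h1 h2
end

section
/- Let R be a principal ideal domain and let M be a free, finitely generated R-module. If H and K are submodules of M each of which admits a complement in M, then H ∩ K admits a complement in M. -/
/-!
A complemented submodule `N` of a torsion-free module has torsion-free quotient, since
`M ⧸ N ≃ C` for a complement `C`. The quotient by `H ⊓ K` embeds into `(M ⧸ H) × (M ⧸ K)`, so it
is torsion-free as well; being finitely generated over a PID it is free, hence projective, and a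
section of `M → M ⧸ (H ⊓ K)` has range complementary to `H ⊓ K`.
-/

open Module Submodule

namespace Submodule

variable {R M : Type*} [Ring R] [AddCommGroup M] [Module R M]

theorem isTorsionFree_quotient_of_isCompl [IsTorsionFree R M] {N C : Submodule R M}
    (h : IsCompl N C) : IsTorsionFree R (M ⧸ N) :=
  (N.quotientEquivOfIsCompl C h).injective.moduleIsTorsionFree _ (map_smul _)

theorem isTorsionFree_quotient_inf {H K : Submodule R M} [IsTorsionFree R (M ⧸ H)]
    [IsTorsionFree R (M ⧸ K)] : IsTorsionFree R (M ⧸ (H ⊓ K)) := by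
  have hker : LinearMap.ker (H.mkQ.prod K.mkQ) = H ⊓ K := by
    rw [LinearMap.ker_prod, ker_mkQ, ker_mkQ]
  let f := (H ⊓ K).liftQ (H.mkQ.prod K.mkQ) hker.ge
  have hf : Function.Injective f := by
    rw [← LinearMap.ker_eq_bot, ker_liftQ_eq_bot' _ _ hker.symm]
  exact hf.moduleIsTorsionFree _ (map_smul f)

theorem exists_isCompl_of_projective_quotient (N : Submodule R M) [Projective R (M ⧸ N)] :
    ∃ C : Submodule R M, IsCompl N C := by
  obtain ⟨s, hs⟩ := N.mkQ.exists_rightInverse_of_surjective N.range_mkQ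
  have hidem : IsIdempotentElem (s ∘ₗ N.mkQ) := by
    rw [IsIdempotentElem, Module.End.mul_eq_comp, LinearMap.comp_assoc,
      ← LinearMap.comp_assoc (h := N.mkQ), hs, LinearMap.id_comp]
  have hker : LinearMap.ker (s ∘ₗ N.mkQ) = N := by
    rw [LinearMap.ker_comp, LinearMap.ker_eq_bot_of_inverse hs, ← LinearMap.ker, ker_mkQ]
  exact ⟨_, hker ▸ (LinearMap.IsIdempotentElem.isCompl hidem).symm⟩

end Submodule

/-- **Lemma (`lemma:intersection_closure`).**  Let `R` be a PID and `M` a free,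
finitely generated `R`-module.  If the submodules `H, K ⊆ M` each admit complements
in `M`, then so does `H ⊓ K`. -/
theorem inf_has_complement
    (R : Type*) [CommRing R] [IsDomain R] [IsPrincipalIdealRing R]
    (M : Type*) [AddCommGroup M] [Module R M]
    [Module.Free R M] [Module.Finite R M] (H K : Submodule R M)
    (hH : ∃ C : Submodule R M, H ⊓ C = ⊥ ∧ H ⊔ C = ⊤)
    (hK : ∃ C : Submodule R M, K ⊓ C = ⊥ ∧ K ⊔ C = ⊤) :
    ∃ C : Submodule R M, (H ⊓ K) ⊓ C = ⊥ ∧ (H ⊓ K) ⊔ C = ⊤ := by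
  obtain ⟨C, hHC, hHC'⟩ := hH
  obtain ⟨D, hKD, hKD'⟩ := hK
  have : IsTorsionFree R (M ⧸ H) :=
    isTorsionFree_quotient_of_isCompl ⟨disjoint_iff.2 hHC, codisjoint_iff.2 hHC'⟩
  have : IsTorsionFree R (M ⧸ K) :=
    isTorsionFree_quotient_of_isCompl ⟨disjoint_iff.2 hKD, codisjoint_iff.2 hKD'⟩
  have : IsTorsionFree R (M ⧸ (H ⊓ K)) := isTorsionFree_quotient_inf
  obtain ⟨E, hE⟩ := exists_isCompl_of_projective_quotient (H ⊓ K)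
  exact ⟨E, hE.inf_eq_bot, hE.sup_eq_top⟩
end
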